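/- For every joint probability distribution P on X_1 × X_2, the conditional mutual information satisfies I_P(X_1;Y_2|X_2) ≤ ∑_{x_2 ∈ X_2} P_2(x_2)·(1 − P(X_1 = 0 | X_2 = x_2))·C_{1,x_2}, where P(X_1 = 0 | X_2 = x_2) = P(0,x_2)/P_2(x_2) and terms with P_2(x_2) = 0 are taken as 0. Symmetrically, I_P(X_2;Y_1|X_1) ≤ ∑_{x_1 ∈ X_1} P_1(x_1)·(1 − P(X_2 = 0 | X_1 = x_1))·C_{2,x_1}. -/

import Mathlib

open Real BigOperators Finset

/-- Entropy of a finite probability vector, with the convention `0 * log 0 = 0`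
(automatic since `Real.log 0 = 0`). -/
noncomputable def ent {n : ℕ} (p : Fin n → ℝ) : ℝ := -∑ y, p y * Real.log (p y)

/-- `Q` is a probability distribution on `Fin n`. -/
def IsProbDist {n : ℕ} (Q : Fin n → ℝ) : Prop := (∀ x, 0 ≤ Q x) ∧ ∑ x, Q x = 1

/-- `P` is a joint probability distribution. -/
def IsJointProbDist {m n : ℕ} (P : Fin m → Fin n → ℝ) : Prop :=
  (∀ x1 x2, 0 ≤ P x1 x2) ∧ ∑ x1, ∑ x2, P x1 x2 = 1

/-- First marginal `P_1`. -/
noncomputable def marg1 {m n : ℕ} (P : Fin m → Fin n → ℝ) (x1 : Fin m) : ℝ := ∑ x2, P x1 x2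

/-- Second marginal `P_2`. -/
noncomputable def marg2 {m n : ℕ} (P : Fin m → Fin n → ℝ) (x2 : Fin n) : ℝ := ∑ x1, P x1 x2

/-- Conditional mutual information `I_P(X₁;Y₂|X₂)`; terms with
`P x1 x2 * W2 x1 x2 y2 = 0` vanish, and summands with `marg2 P x2 = 0` vanish
since then `P x1 x2 = 0`. -/
noncomputable def condMI1 {m n t : ℕ} (P : Fin m → Fin n → ℝ)
    (W2 : Fin m → Fin n → Fin t → ℝ) : ℝ :=
  ∑ x2, ∑ x1, ∑ y2, P x1 x2 * W2 x1 x2 y2 *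
    Real.log (W2 x1 x2 y2 / ((∑ x1', P x1' x2 * W2 x1' x2 y2) / marg2 P x2))

/-- Conditional mutual information `I_P(X₂;Y₁|X₁)`. -/
noncomputable def condMI2 {m n t : ℕ} (P : Fin m → Fin n → ℝ)
    (W1 : Fin m → Fin n → Fin t → ℝ) : ℝ :=
  ∑ x1, ∑ x2, ∑ y1, P x1 x2 * W1 x1 x2 y1 *
    Real.log (W1 x1 x2 y1 / ((∑ x2', P x1 x2' * W1 x1 x2' y1) / marg1 P x1))

/-- Structural assumptions of a generalized push-to-talk two-way channel with
input alphabets `Fin (r1+3)`, `Fin (r2+3)` and output alphabets `Fin (s1+2)`,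
`Fin (s2+2)`: both marginal channels are transition matrices; the row of
input `0` of each user is uniform; for each state, the nonzero-input rows are
permutations of the row of input `1` and have constant column sums
(weak symmetry). -/
def GenPTT {r1 r2 s1 s2 : ℕ} (W1 : Fin (r1 + 3) → Fin (r2 + 3) → Fin (s1 + 2) → ℝ)
    (W2 : Fin (r1 + 3) → Fin (r2 + 3) → Fin (s2 + 2) → ℝ) : Prop :=
  (∀ x1 x2 y1, 0 ≤ W1 x1 x2 y1) ∧ (∀ x1 x2 y2, 0 ≤ W2 x1 x2 y2) ∧
  (∀ x1 x2, ∑ y1, W1 x1 x2 y1 = 1) ∧ (∀ x1 x2, ∑ y2, W2 x1 x2 y2 = 1) ∧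
  (∀ x2 y2, W2 0 x2 y2 = 1 / ((s2 : ℝ) + 2)) ∧
  (∀ x2, ∀ x1 : Fin (r1 + 3), x1 ≠ 0 →
    ∃ σ : Equiv.Perm (Fin (s2 + 2)), ∀ y2, W2 x1 x2 y2 = W2 1 x2 (σ y2)) ∧
  (∀ x2, ∀ y2 y2' : Fin (s2 + 2),
    ∑ x1 ∈ Finset.univ.filter (fun x1 => x1 ≠ (0 : Fin (r1 + 3))), W2 x1 x2 y2 =
    ∑ x1 ∈ Finset.univ.filter (fun x1 => x1 ≠ (0 : Fin (r1 + 3))), W2 x1 x2 y2') ∧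
  (∀ x1 y1, W1 x1 0 y1 = 1 / ((s1 : ℝ) + 2)) ∧
  (∀ x1, ∀ x2 : Fin (r2 + 3), x2 ≠ 0 →
    ∃ σ : Equiv.Perm (Fin (s1 + 2)), ∀ y1, W1 x1 x2 y1 = W1 x1 1 (σ y1)) ∧
  (∀ x1, ∀ y1 y1' : Fin (s1 + 2),
    ∑ x2 ∈ Finset.univ.filter (fun x2 => x2 ≠ (0 : Fin (r2 + 3))), W1 x1 x2 y1 =
    ∑ x2 ∈ Finset.univ.filter (fun x2 => x2 ≠ (0 : Fin (r2 + 3))), W1 x1 x2 y1')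

/-- `C_{1,x₂} = log s₂ − H(row of input 1 of Q_{1,x₂})`. -/
noncomputable def C1 {r1 r2 s2 : ℕ} (W2 : Fin (r1 + 3) → Fin (r2 + 3) → Fin (s2 + 2) → ℝ)
    (x2 : Fin (r2 + 3)) : ℝ := Real.log ((s2 : ℝ) + 2) - ent (fun y2 => W2 1 x2 y2)

/-- `C_{2,x₁} = log s₁ − H(row of input 1 of Q_{2,x₁})`. -/
noncomputable def C2 {r1 r2 s1 : ℕ} (W1 : Fin (r1 + 3) → Fin (r2 + 3) → Fin (s1 + 2) → ℝ)
    (x1 : Fin (r1 + 3)) : ℝ := Real.log ((s1 : ℝ) + 2) - ent (fun y1 => W1 x1 1 y1)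

/-- The channel symmetry property: `C_{1,x₂} = C_{1,1}` for all `x₂ ≠ 0` and
`C_{2,x₁} = C_{2,1}` for all `x₁ ≠ 0`. -/
def SymProp {r1 r2 s1 s2 : ℕ} (W1 : Fin (r1 + 3) → Fin (r2 + 3) → Fin (s1 + 2) → ℝ)
    (W2 : Fin (r1 + 3) → Fin (r2 + 3) → Fin (s2 + 2) → ℝ) : Prop :=
  (∀ x2 : Fin (r2 + 3), x2 ≠ 0 → C1 W2 x2 = C1 W2 1) ∧
  (∀ x1 : Fin (r1 + 3), x1 ≠ 0 → C2 W1 x1 = C2 W1 1)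

/-! For a fixed input `x₂` of the other user, `I(X₁;Y₂|X₂ = x₂) = H(Y₂) - H(Y₂|X₁)` and
`H(Y₂) ≤ log s₂` by Jensen, so the information is at most the average over `x₁` of the row
capacities `log s₂ - H(W₂(·|x₁,x₂))`. The silent input `0` has a uniform row, hence capacity `0`,
and every other row is a permutation of row `1`, hence has capacity `C_{1,x₂}`. The second bound
is the first one for the transposed channel. -/

section MutualInformation

variable {α β : Type*} [Fintype α] [Fintype β]

lemma mul_log_sum_le_sum_mul_log_add_mul_log_card {q : β → ℝ} (hq : ∀ y, 0 ≤ q y) :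
    (∑ y, q y) * log (∑ y, q y) ≤ ∑ y, q y * log (q y) + (∑ y, q y) * log (Fintype.card β) := by
  rcases isEmpty_or_nonempty β with _ | _
  · simp
  set S := ∑ y, q y
  have hc : (0 : ℝ) < Fintype.card β := by exact_mod_cast Fintype.card_pos
  have hJ := convexOn_mul_log.map_sum_le (t := univ) (w := fun _ => (Fintype.card β : ℝ)⁻¹)
    (p := q) (fun _ _ => by positivity) (by simp [card_univ, hc.ne'])
    (fun y _ => Set.mem_Ici.2 (hq y))
  simp only [smul_eq_mul, ← mul_sum] at hJ
  have hS : S * log (S / Fintype.card β) = S * log S - S * log (Fintype.card β) := by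
    rcases eq_or_ne S 0 with h0 | h0
    · simp [h0]
    · rw [log_div h0 hc.ne', mul_sub]
  have hJ' : S * log (S / Fintype.card β) ≤ ∑ y, q y * log (q y) := by
    have := mul_le_mul_of_nonneg_left hJ hc.le
    rwa [← mul_assoc, ← mul_assoc, mul_inv_cancel₀ hc.ne', one_mul, mul_inv_cancel_left₀ hc.ne',
      inv_mul_eq_div] at this
  linarith

variable {p : α → ℝ} {W : α → β → ℝ}

/-- `I(X;Y) = H(Y) - H(Y|X)`, for an unnormalised input distribution `p`. -/
lemma sum_sum_mul_log_div_eq (hp : ∀ x, 0 ≤ p x) (hW : ∀ x y, 0 ≤ W x y)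
    (hW1 : ∀ x, ∑ y, W x y = 1) :
    ∑ x, ∑ y, p x * W x y * log (W x y / ((∑ x', p x' * W x' y) / ∑ x', p x')) =
      ∑ x, p x * ∑ y, W x y * log (W x y) + (∑ x, p x) * log (∑ x, p x) -
        ∑ y, (∑ x, p x * W x y) * log (∑ x, p x * W x y) := by
  set S := ∑ x, p x
  have hterm : ∀ x y, p x * W x y * log (W x y / ((∑ x', p x' * W x' y) / S)) =
      p x * W x y * log (W x y) + W x y * (p x * log S) -
        p x * W x y * log (∑ x', p x' * W x' y) := by
    intro x y
    rcases eq_or_ne (p x * W x y) 0 with h0 | h0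
    · rw [h0]
      rcases mul_eq_zero.1 h0 with h | h <;> simp [h]
    have hpos : 0 < p x * W x y := lt_of_le_of_ne (mul_nonneg (hp x) (hW x y)) h0.symm
    have hq : 0 < ∑ x', p x' * W x' y := hpos.trans_le <|
      single_le_sum (fun x' _ => mul_nonneg (hp x') (hW x' y)) (mem_univ x)
    have hS : 0 < S := (pos_of_mul_pos_left hpos (hW x y)).trans_le <|
      single_le_sum (fun x' _ => hp x') (mem_univ x)
    rw [log_div (right_ne_zero_of_mul h0) (div_pos hq hS).ne', log_div hq.ne' hS.ne']
    ring
  simp only [hterm, sum_add_distrib, sum_sub_distrib, ← sum_mul, hW1, one_mul, mul_sum]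
  simp only [sum_mul (s := univ) (f := fun x => p x * W x _), mul_assoc]
  rw [sum_comm (f := fun x y => p x * (W x y * log (∑ x', p x' * W x' y)))]

lemma sum_sum_mul_log_div_le (hp : ∀ x, 0 ≤ p x) (hW : ∀ x y, 0 ≤ W x y)
    (hW1 : ∀ x, ∑ y, W x y = 1) :
    ∑ x, ∑ y, p x * W x y * log (W x y / ((∑ x', p x' * W x' y) / ∑ x', p x')) ≤
      ∑ x, p x * (log (Fintype.card β) + ∑ y, W x y * log (W x y)) := by
  have hq : ∑ y, ∑ x, p x * W x y = ∑ x, p x := by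
    rw [sum_comm]; simp only [← mul_sum, hW1, mul_one]
  have hJ := mul_log_sum_le_sum_mul_log_add_mul_log_card (q := fun y => ∑ x, p x * W x y)
    (fun y => sum_nonneg fun x _ => mul_nonneg (hp x) (hW x y))
  rw [hq] at hJ
  rw [sum_sum_mul_log_div_eq hp hW hW1]
  simp only [mul_add, sum_add_distrib, ← sum_mul]
  linarith

end MutualInformation

lemma ent_comp_perm {n : ℕ} (p : Fin n → ℝ) (σ : Equiv.Perm (Fin n)) : ent (p ∘ σ) = ent p := by
  simp only [ent, Function.comp_apply, Equiv.sum_comp σ (fun y => p y * log (p y))]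

lemma ent_const_inv (n : ℕ) : ent (fun _ : Fin n => 1 / (n : ℝ)) = log n := by
  rcases eq_or_ne n 0 with rfl | hn
  · simp [ent]
  · simp only [ent, sum_const, card_univ, Fintype.card_fin, nsmul_eq_mul, one_div, log_inv]
    field_simp

lemma sum_mul_eq_sub_mul_of_eq_zero_of_eq {α : Type*} [Fintype α] {p c : α → ℝ} {x₀ : α}
    {C : ℝ} (h₀ : c x₀ = 0) (hC : ∀ x, x ≠ x₀ → c x = C) :
    ∑ x, p x * c x = (∑ x, p x - p x₀) * C := by
  classical
  rw [Fintype.sum_eq_add_sum_compl x₀, Fintype.sum_eq_add_sum_compl x₀ p, h₀,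
    sum_congr rfl fun x hx => by rw [hC x (by simpa using hx)], ← sum_mul]
  ring

lemma sum_mul_one_sub_div_sum {α : Type*} [Fintype α] {p : α → ℝ} (hp : ∀ x, 0 ≤ p x)
    (x₀ : α) : (∑ x, p x) * (1 - p x₀ / ∑ x, p x) = ∑ x, p x - p x₀ := by
  have hle : p x₀ ≤ ∑ x, p x := single_le_sum (fun x _ => hp x) (mem_univ x₀)
  rw [mul_one_sub, mul_div_cancel_of_imp' fun h => le_antisymm (h ▸ hle) (hp x₀)]

lemma sum_sum_mul_log_div_le_of_uniform_of_perm {α : Type*} [Fintype α] {t : ℕ}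
    {p : α → ℝ} (hp : ∀ x, 0 ≤ p x) {W : α → Fin t → ℝ} (hW : ∀ x y, 0 ≤ W x y)
    (hW1 : ∀ x, ∑ y, W x y = 1) {x₀ x₁ : α} (hunif : ∀ y, W x₀ y = 1 / t)
    (hperm : ∀ x, x ≠ x₀ → ∃ σ : Equiv.Perm (Fin t), ∀ y, W x y = W x₁ (σ y)) :
    ∑ x, ∑ y, p x * W x y * log (W x y / ((∑ x', p x' * W x' y) / ∑ x', p x')) ≤
      (∑ x, p x) * (1 - p x₀ / ∑ x, p x) * (log t - ent (W x₁)) := by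
  refine (sum_sum_mul_log_div_le hp hW hW1).trans_eq ?_
  have hrow : ∀ x, log (Fintype.card (Fin t)) + ∑ y, W x y * log (W x y) = log t - ent (W x) :=
    fun x => by rw [ent, Fintype.card_fin, sub_neg_eq_add]
  simp only [hrow, sum_mul_one_sub_div_sum hp]
  refine sum_mul_eq_sub_mul_of_eq_zero_of_eq ?_ fun x hx => ?_
  · rw [show W x₀ = fun _ => 1 / (t : ℝ) from funext hunif, ent_const_inv, sub_self]
  · obtain ⟨σ, hσ⟩ := hperm x hx
    rw [show W x = W x₁ ∘ σ from funext hσ, ent_comp_perm]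

lemma condMI1_le {m n t : ℕ} {P : Fin m → Fin n → ℝ} (hP : ∀ x1 x2, 0 ≤ P x1 x2)
    {W : Fin m → Fin n → Fin t → ℝ} (hW : ∀ x1 x2 y, 0 ≤ W x1 x2 y)
    (hW1 : ∀ x1 x2, ∑ y, W x1 x2 y = 1) {x₀ x₁ : Fin m} (hunif : ∀ x2 y, W x₀ x2 y = 1 / t)
    (hperm : ∀ x2, ∀ x1, x1 ≠ x₀ → ∃ σ : Equiv.Perm (Fin t), ∀ y, W x1 x2 y = W x₁ x2 (σ y)) :
    condMI1 P W ≤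
      ∑ x2, marg2 P x2 * (1 - P x₀ x2 / marg2 P x2) * (log t - ent (fun y => W x₁ x2 y)) :=
  sum_le_sum fun x2 _ => sum_sum_mul_log_div_le_of_uniform_of_perm (fun x1 => hP x1 x2)
    (fun x1 => hW x1 x2) (fun x1 => hW1 x1 x2) (hunif x2) (hperm x2)

lemma condMI2_eq_condMI1 {m n t : ℕ} (P : Fin m → Fin n → ℝ) (W : Fin m → Fin n → Fin t → ℝ) :
    condMI2 P W = condMI1 (fun x2 x1 => P x1 x2) (fun x2 x1 => W x1 x2) :=
  rfl

theorem stmt8_general (r1 r2 s1 s2 : ℕ)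
    (W1 : Fin (r1 + 3) → Fin (r2 + 3) → Fin (s1 + 2) → ℝ)
    (W2 : Fin (r1 + 3) → Fin (r2 + 3) → Fin (s2 + 2) → ℝ)
    (hW : GenPTT W1 W2)
    (P : Fin (r1 + 3) → Fin (r2 + 3) → ℝ) (hP : IsJointProbDist P) :
    condMI1 P W2 ≤ ∑ x2, marg2 P x2 * (1 - P 0 x2 / marg2 P x2) * C1 W2 x2 ∧
    condMI2 P W1 ≤ ∑ x1, marg1 P x1 * (1 - P x1 0 / marg1 P x1) * C2 W1 x1 := by
  obtain ⟨hW1nn, hW2nn, hW1sum, hW2sum, hW2unif, hW2perm, -, hW1unif, hW1perm, -⟩ := hW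
  constructor
  · refine (condMI1_le hP.1 hW2nn hW2sum (t := s2 + 2)
      (by exact_mod_cast hW2unif) hW2perm).trans_eq ?_
    simp only [C1, Nat.cast_add, Nat.cast_ofNat]
  · rw [condMI2_eq_condMI1]
    refine (condMI1_le (fun x2 x1 => hP.1 x1 x2) (fun x2 x1 => hW1nn x1 x2)
      (fun x2 x1 => hW1sum x1 x2) (t := s1 + 2)
      (by exact_mod_cast hW1unif) hW1perm).trans_eq ?_
    simp only [C2, Nat.cast_add, Nat.cast_ofNat]
    rfl

/-- Bounds on the conditional mutual informations in terms of the one-way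
capacities: terms with `marg2 P x2 = 0` (resp. `marg1 P x1 = 0`) vanish since
division by zero is zero. -/
theorem stmt8 (r1 r2 s1 s2 : ℕ)
    (W1 : Fin (r1 + 3) → Fin (r2 + 3) → Fin (s1 + 2) → ℝ)
    (W2 : Fin (r1 + 3) → Fin (r2 + 3) → Fin (s2 + 2) → ℝ)
    (hW : GenPTT W1 W2) (hSym : SymProp W1 W2)
    (P : Fin (r1 + 3) → Fin (r2 + 3) → ℝ) (hP : IsJointProbDist P) :
    condMI1 P W2 ≤ ∑ x2, marg2 P x2 * (1 - P 0 x2 / marg2 P x2) * C1 W2 x2 ∧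
    condMI2 P W1 ≤ ∑ x1, marg1 P x1 * (1 - P x1 0 / marg1 P x1) * C2 W1 x1 :=
  stmt8_general r1 r2 s1 s2 W1 W2 hW P hP
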